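/- arXiv:2010.12057 — 3 statements merged into one kernel-verified Lean document; each statement's English description precedes it below -/
import Mathlib

section
/- Horizontal pasting detection of D-exactness: let D be a left derivator and consider a square with functors v : A → B, p : A → C, q : B → D₀, w : C → D₀ and natural transformation α : q∘v ⟹ w∘p. For each c ∈ C paste on the left the comma square of p over c. Then the original square is D-exact if and only if for every c ∈ C the total pasted square (with corners (p/c), B, e, D₀) is D-exact. -/
/-
By Der2 a morphism in `D(C)` is invertible as soon as its restrictions along all points
`c : e ⟶ C` are. Pasting the comma square of `p` over `c` to the left of the given square
gives a square whose left mate is, up to the strictness isomorphisms of `D`, the horizontal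
composite of the two mates: the mate of the comma square (invertible by Der4L) followed by
`c* α_!`. So the pasted square is `D`-exact exactly when `c* α_!` is invertible.
-/

open CategoryTheory

universe w v

namespace DerTheory

abbrev ecat : Cat.{0, 0} := Cat.of (Discrete PUnit.{1})

/-- The empty category. -/
abbrev emptyCat : Cat.{0, 0} := Cat.of (Discrete PEmpty.{1})

/-- The functor `e ⟶ K` classifying an object `k : K`. -/
abbrev ptFun {K : Cat.{0, 0}} (k : K) : ecat ⟶ K := (Functor.fromPUnit.{0} k).toCatHom

/-- The projection `K ⟶ e`. -/
abbrev starFun (K : Cat.{0, 0}) : K ⟶ ecat := (Functor.star K).toCatHom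

open Bicategory in
/-- A prederivator: a strict 2-functor `Cat^op ⥤ CAT`, reversing 1-morphisms and
preserving 2-morphisms. -/
structure Prederivator where
  obj : Cat.{0, 0} → Cat.{v, w}
  map : {J K : Cat.{0, 0}} → (J ⟶ K) → (obj K ⟶ obj J)
  map₂ : {J K : Cat.{0, 0}} → {f g : J ⟶ K} → (f ⟶ g) → (map f ⟶ map g)
  map_id : ∀ K : Cat.{0, 0}, map (𝟙 K) = 𝟙 (obj K)
  map_comp : ∀ {I J K : Cat.{0, 0}} (f : I ⟶ J) (g : J ⟶ K), map (f ≫ g) = map g ≫ map f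
  map₂_id : ∀ {J K : Cat.{0, 0}} (f : J ⟶ K), map₂ (𝟙 f) = 𝟙 (map f)
  map₂_comp : ∀ {J K : Cat.{0, 0}} {f g h : J ⟶ K} (α : f ⟶ g) (β : g ⟶ h),
    map₂ (α ≫ β) = map₂ α ≫ map₂ β
  map₂_whiskerLeft : ∀ {I J K : Cat.{0, 0}} (f : I ⟶ J) {g h : J ⟶ K} (α : g ⟶ h),
    map₂ (f ◁ α) = eqToHom (map_comp f g) ≫ map₂ α ▷ map f ≫ eqToHom (map_comp f h).symm
  map₂_whiskerRight : ∀ {I J K : Cat.{0, 0}} {f g : I ⟶ J} (α : f ⟶ g) (h : J ⟶ K),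
    map₂ (α ▷ h) = eqToHom (map_comp f h) ≫ map h ◁ map₂ α ≫ eqToHom (map_comp g h).symm

/-- A semiderivator: a prederivator satisfying (Der1) and (Der2). -/
structure Semiderivator extends Prederivator where
  der1 : ∀ {ι : Type} (F : ι → Cat.{0, 0}),
    (Functor.pi' fun i =>
      (map (show F i ⟶ Cat.of (Σ j, ↥(F j)) from (Sigma.incl (C := fun j => ↥(F j)) i).toCatHom)).toFunctor).IsEquivalence
  der2 : ∀ {K : Cat.{0, 0}} {X Y : obj K} (φ : X ⟶ Y),
    (∀ k : K, IsIso ((map (ptFun k)).toFunctor.map φ)) → IsIso φ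

/-- The data of left Kan extensions along every functor. -/
structure LeftDerivatorData extends Semiderivator where
  kanL : {J K : Cat.{0, 0}} → (J ⟶ K) → (obj J ⟶ obj K)
  adjL : ∀ {J K : Cat.{0, 0}} (f : J ⟶ K), (kanL f).toFunctor ⊣ (map f).toFunctor

/-- The Beck–Chevalley transformation (left mate) `p_! ∘ v* ⟹ w* ∘ q_!` associated to a
square `α : v ≫ q ⟶ p ≫ w` in `Cat`. -/
def LeftDerivatorData.bcL (D : LeftDerivatorData) {A B C E : Cat.{0, 0}}
    (p : A ⟶ C) (q : B ⟶ E) (v : A ⟶ B) (w : C ⟶ E) (α : (v ≫ q : A ⟶ E) ⟶ p ≫ w) :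
    (D.map v ≫ D.kanL p : D.obj B ⟶ D.obj C) ⟶ D.kanL q ≫ D.map w :=
  Cat.Hom₂.ofNatTrans (Functor.whiskerRight (D.adjL q).unit ((D.map v).toFunctor ⋙ (D.kanL p).toFunctor) ≫
    Functor.whiskerLeft (D.kanL q).toFunctor
      (Functor.whiskerRight (eqToHom (D.map_comp v q).symm ≫ D.map₂ α ≫ eqToHom (D.map_comp p w)).toNatTrans
        (D.kanL p).toFunctor) ≫
    Functor.whiskerLeft ((D.kanL q).toFunctor ⋙ (D.map w).toFunctor) (D.adjL p).counit)

/-- A left derivator: a semiderivator satisfying (Der3L) and (Der4L). -/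
structure LeftDerivator extends LeftDerivatorData where
  der4L : ∀ {J K : Cat.{0, 0}} (u : J ⟶ K) (k : K),
    IsIso (toLeftDerivatorData.bcL (show Cat.of (CostructuredArrow u.toFunctor k) ⟶ ecat from (Comma.snd u.toFunctor (Functor.fromPUnit k)).toCatHom)
      u (Comma.fst u.toFunctor (Functor.fromPUnit k)).toCatHom (ptFun k) (Cat.Hom₂.ofNatTrans (Comma.natTrans u.toFunctor (Functor.fromPUnit k))))

lemma _root_.CategoryTheory.Cat.Hom₂.isIso_iff_isIso_toNatTrans {X Y : Cat} {F G : X ⟶ Y}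
    (η : F ⟶ G) : IsIso η ↔ IsIso η.toNatTrans := by
  refine ⟨fun _ => inferInstanceAs (IsIso (asIso η).hom.toNatTrans), fun _ => ?_⟩
  exact ⟨⟨Cat.Hom₂.ofNatTrans (inv η.toNatTrans), Cat.Hom₂.ext (by simp), Cat.Hom₂.ext (by simp)⟩⟩

section Mates

variable {C D E F : Type*} [Category C] [Category D] [Category E] [Category F]
  {L₁ : C ⥤ D} {R₁ : D ⥤ C} {L₂ : E ⥤ F} {R₂ : F ⥤ E} (adj₁ : L₁ ⊣ R₁) (adj₂ : L₂ ⊣ R₂)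

lemma _root_.CategoryTheory.mateEquiv_symm_eqToHom {G G' : C ⥤ E} {H H' : D ⥤ F} (hG : G = G') (hH : H = H')
    (β : TwoSquare R₁ H' G' R₂) :
    (mateEquiv (G := G) (H := H) adj₁ adj₂).symm
        (Functor.whiskerLeft R₁ (eqToHom hG) ≫ β.natTrans ≫
          Functor.whiskerRight (eqToHom hH.symm) R₂) =
      Functor.whiskerRight (eqToHom hG) L₂ ≫ ((mateEquiv adj₁ adj₂).symm β).natTrans ≫
        Functor.whiskerLeft L₁ (eqToHom hH.symm) := by
  subst hG hH
  ext X
  simp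

lemma _root_.CategoryTheory.mateEquiv_symm_vComp {A B : Type*} [Category A] [Category B]
    {L₃ : A ⥤ B} {R₃ : B ⥤ A} (adj₃ : L₃ ⊣ R₃)
    {G₁ : C ⥤ E} {H₁ : D ⥤ F} {G₂ : E ⥤ A} {H₂ : F ⥤ B}
    (α : TwoSquare R₁ H₁ G₁ R₂) (β : TwoSquare R₂ H₂ G₂ R₃) :
    (mateEquiv (G := G₁ ⋙ G₂) (H := H₁ ⋙ H₂) adj₁ adj₃).symm (α.vComp β) =
      ((mateEquiv adj₁ adj₂).symm α).hComp ((mateEquiv adj₂ adj₃).symm β) := by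
  rw [Equiv.symm_apply_eq, mateEquiv_vcomp adj₁ adj₂ adj₃, Equiv.apply_symm_apply,
    Equiv.apply_symm_apply]

end Mates

lemma _root_.CategoryTheory.TwoSquare.isIso_hComp_iff {C₁ C₂ C₃ C₄ C₅ C₆ : Type*} [Category C₁] [Category C₂]
    [Category C₃] [Category C₄] [Category C₅] [Category C₆] {T : C₁ ⥤ C₂} {L : C₁ ⥤ C₃}
    {R : C₂ ⥤ C₄} {B : C₃ ⥤ C₄} {T' : C₂ ⥤ C₅} {R' : C₅ ⥤ C₆} {B' : C₄ ⥤ C₆}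
    (w : TwoSquare T L R B) (w' : TwoSquare T' R R' B') [IsIso w'.natTrans] :
    IsIso (w.hComp w').natTrans ↔ IsIso (Functor.whiskerRight w.natTrans B') := by
  have hcomp : (w.hComp w').natTrans = ((Functor.associator _ _ _).hom ≫
      Functor.whiskerLeft T w'.natTrans ≫ (Functor.associator _ _ _).inv) ≫
        Functor.whiskerRight w.natTrans B' ≫ (Functor.associator _ _ _).hom := by
    simp only [TwoSquare.hComp, Category.assoc]
  rw [hcomp, isIso_comp_left_iff, isIso_comp_right_iff]

def hPaste {A' A B C' C E : Cat} {p : A ⟶ C} {q : B ⟶ E} {v : A ⟶ B} {w : C ⟶ E}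
    (α : v ≫ q ⟶ p ≫ w) {p' : A' ⟶ C'} {v' : A' ⟶ A} {w' : C' ⟶ C} (β : v' ≫ p ⟶ p' ≫ w') :
    (v' ≫ v) ≫ q ⟶ p' ≫ (w' ≫ w) :=
  Cat.Hom₂.ofNatTrans (Functor.whiskerLeft v'.toFunctor α.toNatTrans ≫
    Functor.whiskerRight β.toNatTrans w.toFunctor)

namespace Prederivator

variable (D : Prederivator) {A' A B C' C E : Cat.{0, 0}}
  {p : A ⟶ C} {q : B ⟶ E} {v : A ⟶ B} {w : C ⟶ E}

def mapSquare (α : v ≫ q ⟶ p ≫ w) :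
    TwoSquare (D.map q).toFunctor (D.map w).toFunctor (D.map v).toFunctor (D.map p).toFunctor :=
  (eqToHom (D.map_comp v q).symm ≫ D.map₂ α ≫ eqToHom (D.map_comp p w)).toNatTrans

lemma mapSquare_hPaste (α : v ≫ q ⟶ p ≫ w) {p' : A' ⟶ C'} {v' : A' ⟶ A} {w' : C' ⟶ C}
    (β : v' ≫ p ⟶ p' ≫ w') :
    D.mapSquare (hPaste α β) =
      Functor.whiskerLeft (D.map q).toFunctor
          (eqToHom (congrArg Cat.Hom.toFunctor (D.map_comp v' v))) ≫
        ((D.mapSquare α).vComp (D.mapSquare β)).natTrans ≫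
        Functor.whiskerRight (eqToHom (congrArg Cat.Hom.toFunctor (D.map_comp w' w)).symm)
          (D.map p').toFunctor := by
  have hPaste_eq : hPaste α β = Bicategory.whiskerLeft v' α ≫ Bicategory.whiskerRight β w := rfl
  ext X
  simp [mapSquare, hPaste_eq, TwoSquare.vComp, D.map₂_comp, D.map₂_whiskerLeft,
    D.map₂_whiskerRight, eqToHom_map]

end Prederivator

lemma Semiderivator.isIso_iff_forall_isIso_whiskerRight (D : Semiderivator)
    {X : Type*} [Category X] {K : Cat.{0, 0}} {F G : X ⥤ D.obj K} (φ : F ⟶ G) :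
    IsIso φ ↔ ∀ k : K, IsIso (Functor.whiskerRight φ (D.map (ptFun k)).toFunctor) := by
  refine ⟨fun _ _ => inferInstance, fun h => ?_⟩
  have (x : X) : IsIso (φ.app x) :=
    D.der2 _ fun k => NatIso.isIso_app_of_isIso (Functor.whiskerRight φ _) x
  exact NatIso.isIso_of_isIso_app φ

namespace LeftDerivatorData

variable (D : LeftDerivatorData) {A' A B C' C E : Cat.{0, 0}}
  {p : A ⟶ C} {q : B ⟶ E} {v : A ⟶ B} {w : C ⟶ E}

lemma bcL_toNatTrans (α : v ≫ q ⟶ p ≫ w) :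
    (D.bcL p q v w α).toNatTrans = (mateEquiv (D.adjL q) (D.adjL p)).symm (D.mapSquare α) := by
  ext X
  simp [bcL, Prederivator.mapSquare, mateEquiv]

lemma bcL_hPaste (α : v ≫ q ⟶ p ≫ w) {p' : A' ⟶ C'} {v' : A' ⟶ A} {w' : C' ⟶ C}
    (β : v' ≫ p ⟶ p' ≫ w') :
    (D.bcL p' q (v' ≫ v) (w' ≫ w) (hPaste α β)).toNatTrans =
      Functor.whiskerRight (eqToHom (congrArg Cat.Hom.toFunctor (D.map_comp v' v)))
          (D.kanL p').toFunctor ≫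
        (TwoSquare.hComp (D.bcL p q v w α).toNatTrans (D.bcL p' p v' w' β).toNatTrans).natTrans ≫
        Functor.whiskerLeft (D.kanL q).toFunctor
          (eqToHom (congrArg Cat.Hom.toFunctor (D.map_comp w' w)).symm) := by
  rw [bcL_toNatTrans, bcL_toNatTrans, bcL_toNatTrans, Prederivator.mapSquare_hPaste,
    mateEquiv_symm_eqToHom _ _ _ (congrArg Cat.Hom.toFunctor (D.map_comp w' w)),
    mateEquiv_symm_vComp (D.adjL q) (D.adjL p) (D.adjL p')]

lemma isIso_bcL_hPaste_iff (α : v ≫ q ⟶ p ≫ w) {p' : A' ⟶ C'} {v' : A' ⟶ A} {w' : C' ⟶ C}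
    (β : v' ≫ p ⟶ p' ≫ w') (hβ : IsIso (D.bcL p' p v' w' β)) :
    IsIso (D.bcL p' q (v' ≫ v) (w' ≫ w) (hPaste α β)) ↔
      IsIso (Functor.whiskerRight (D.bcL p q v w α).toNatTrans (D.map w').toFunctor) := by
  have : IsIso (D.bcL p' p v' w' β).toNatTrans :=
    (Cat.Hom₂.isIso_iff_isIso_toNatTrans _).mp hβ
  rw [Cat.Hom₂.isIso_iff_isIso_toNatTrans, bcL_hPaste, isIso_comp_left_iff, isIso_comp_right_iff]
  exact TwoSquare.isIso_hComp_iff _ _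

end LeftDerivatorData

/-- **Horizontal pasting detection of `D`-exactness.**  Let `D` be a left derivator and
consider a square with functors `v : A ⟶ B`, `p : A ⟶ C`, `q : B ⟶ E`, `w : C ⟶ E` and a
natural transformation `α : q ∘ v ⟹ w ∘ p`.  For each `c ∈ C` paste on the left the comma
square of `p` over `c`.  Then the original square is `D`-exact (its left mate
`α_! : p_! ∘ v* ⟹ w* ∘ q_!` is an isomorphism) if and only if for every `c ∈ C` the total
pasted square, with corners `(p/c), B, e, E`, is `D`-exact. -/
theorem bcL_isIso_iff_pasted (D : LeftDerivator) {A B C E : Cat.{0, 0}}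
    (v : A ⟶ B) (p : A ⟶ C) (q : B ⟶ E) (w : C ⟶ E)
    (α : (v ≫ q : A ⟶ E) ⟶ p ≫ w) :
    IsIso (D.toLeftDerivatorData.bcL p q v w α) ↔
      ∀ c : C,
        IsIso (D.toLeftDerivatorData.bcL
          (show Cat.of (CostructuredArrow p.toFunctor c) ⟶ ecat from
            (Comma.snd p.toFunctor (Functor.fromPUnit c)).toCatHom)
          q
          ((Comma.fst p.toFunctor (Functor.fromPUnit c)).toCatHom ≫ v)
          (ptFun c ≫ w)
          (show (((Comma.fst p.toFunctor (Functor.fromPUnit c)).toCatHom ≫ v) ≫ q :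
              Cat.of (CostructuredArrow p.toFunctor c) ⟶ E) ⟶
              (Comma.snd p.toFunctor (Functor.fromPUnit c)).toCatHom ≫ (ptFun c ≫ w) from
            Cat.Hom₂.ofNatTrans (Functor.whiskerLeft (Comma.fst p.toFunctor (Functor.fromPUnit c)) α.toNatTrans ≫
              Functor.whiskerRight (Comma.natTrans p.toFunctor (Functor.fromPUnit c)) w.toFunctor))) := by
  rw [Cat.Hom₂.isIso_iff_isIso_toNatTrans, D.isIso_iff_forall_isIso_whiskerRight]
  exact forall_congr' fun c => (D.isIso_bcL_hPaste_iff α _ (D.der4L p c)).symm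

end DerTheory
end

section
/- For functors u₁ : J₁ → K and u₂ : J₂ → K, the functor r : (u₁/u₂(j₂)) → (pr₂/j₂) sending (j₁, h : u₁(j₁) → u₂(j₂)) to the object of the comma category (pr₂/j₂) given by ((j₁, j₂, h), id_{j₂}) admits a left adjoint, given by sending ((j₁', j₂', f, g : j₂' → j₂)) to (j₁', u₂(g) ∘ f). -/
open CategoryTheory

universe v₁ v₂ v₃ u₁ u₂ u₃

variable {J₁ : Type u₁} {J₂ : Type u₂} {K : Type u₃}
variable [Category.{v₁} J₁] [Category.{v₂} J₂] [Category.{v₃} K]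

/-- The object `(j₁, j₂, h)` of the comma category `(u₁/u₂)` associated to an object
`(j₁, h : u₁(j₁) ⟶ u₂(j₂))` of `(u₁/u₂(j₂))`. -/
def rObj (u₁ : J₁ ⥤ K) (u₂ : J₂ ⥤ K) (j₂ : J₂) (X : CostructuredArrow u₁ (u₂.obj j₂)) :
    Comma u₁ u₂ where
  left := X.left
  right := j₂
  hom := X.hom

/-- The comparison functor `r : (u₁/u₂(j₂)) ⥤ (pr₂/j₂)`, sending
`(j₁, h : u₁(j₁) ⟶ u₂(j₂))` to the object `((j₁, j₂, h), id_{j₂})` of the comma category of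
the second projection `pr₂ : (u₁/u₂) ⥤ J₂` over `j₂ : J₂`. -/
def commaComparison (u₁ : J₁ ⥤ K) (u₂ : J₂ ⥤ K) (j₂ : J₂) :
    CostructuredArrow u₁ (u₂.obj j₂) ⥤ CostructuredArrow (Comma.snd u₁ u₂) j₂ where
  obj X := CostructuredArrow.mk (S := Comma.snd u₁ u₂) (Y := rObj u₁ u₂ j₂ X) (𝟙 j₂)
  map {X Y} g := CostructuredArrow.homMk
    { left := g.left, right := 𝟙 j₂, w := by simp [rObj] }
    (Category.comp_id _)
  map_id X := by
    apply CostructuredArrow.hom_ext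
    exact CommaMorphism.ext rfl rfl
  map_comp f g := by
    apply CostructuredArrow.hom_ext
    exact CommaMorphism.ext rfl (Category.comp_id _).symm

theorem commaComparison_eq_costructuredArrowSndInclusion (u₁ : J₁ ⥤ K) (u₂ : J₂ ⥤ K) (j₂ : J₂) :
    commaComparison u₁ u₂ j₂ = Comma.costructuredArrowSndInclusion u₁ u₂ j₂ :=
  rfl

/-- **The comparison functor `r : (u₁/u₂(j₂)) ⥤ (pr₂/j₂)` admits a left adjoint**, given by
sending `(j₁', j₂', f, g : j₂' ⟶ j₂)` to `(j₁', u₂(g) ∘ f)`. -/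
theorem commaComparison_isRightAdjoint (u₁ : J₁ ⥤ K) (u₂ : J₂ ⥤ K) (j₂ : J₂) :
    (commaComparison u₁ u₂ j₂).IsRightAdjoint := by
  rw [commaComparison_eq_costructuredArrowSndInclusion]
  exact (Comma.costructuredArrowSndAdjunction u₁ u₂ j₂).isRightAdjoint
end

section
/- Let D be a pointed derivator and u : J → K a sieve. Then the right Kan extension u_* : D(J) → D(K) is fully faithful, and for every X ∈ D(J) and every object k ∈ K not in the image of u, the evaluation k*(u_* X) is a zero object of D(e); for k = u(j') in the image, k*(u_* X) ≅ j'* X. -/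
/-!
Let `k ∈ K` and consider the comma category `k/u` with its projections `p : k/u ⥤ e` and
`v : k/u ⥤ J`. Der4 identifies `k* u_* X` with `p_* v* X`.

If `k` is not in the image of the sieve `u`, then `k/u` is empty, so `D(k/u)` is trivial by Der1
and `p_* v* X` is terminal, hence zero in the pointed category `D(e)`.

If `k = u j`, then `(j, 𝟙)` is initial in `k/u` because `u` is fully faithful, so its inclusion
`a : e ⥤ k/u` is left adjoint to `p`. Applying `D` gives `p* ⊣ a*`, so `a*` inverts the counit of
`p* ⊣ p_*`. Applying `a*` to the mate description of the Der4 isomorphism then shows that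
`j* = a* v*` inverts the counit `u* u_* X ⟶ X`. By Der2 this counit is invertible, so `u_*` is
fully faithful.
-/

open CategoryTheory

universe w v

namespace DerTheory

structure DerivatorData extends Semiderivator where
  kanL : {J K : Cat.{0, 0}} → (J ⟶ K) → (obj J ⟶ obj K)
  adjL : ∀ {J K : Cat.{0, 0}} (f : J ⟶ K), (kanL f).toFunctor ⊣ (map f).toFunctor
  kanR : {J K : Cat.{0, 0}} → (J ⟶ K) → (obj J ⟶ obj K)
  adjR : ∀ {J K : Cat.{0, 0}} (f : J ⟶ K), (map f).toFunctor ⊣ (kanR f).toFunctor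

def DerivatorData.bcL (D : DerivatorData) {A B C E : Cat.{0, 0}}
    (p : A ⟶ C) (q : B ⟶ E) (v : A ⟶ B) (w : C ⟶ E) (α : (v ≫ q : A ⟶ E) ⟶ p ≫ w) :
    (D.map v ≫ D.kanL p : D.obj B ⟶ D.obj C) ⟶ D.kanL q ≫ D.map w :=
  ⟨Functor.whiskerRight (D.adjL q).unit ((D.map v).toFunctor ⋙ (D.kanL p).toFunctor) ≫
    Functor.whiskerLeft (D.kanL q).toFunctor
      (Functor.whiskerRight (eqToHom (D.map_comp v q).symm ≫ D.map₂ α ≫ eqToHom (D.map_comp p w)).toNatTrans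
        (D.kanL p).toFunctor) ≫
    Functor.whiskerLeft ((D.kanL q).toFunctor ⋙ (D.map w).toFunctor) (D.adjL p).counit⟩

def DerivatorData.bcR (D : DerivatorData) {A B C E : Cat.{0, 0}}
    (p : A ⟶ C) (q : B ⟶ E) (v : A ⟶ B) (w : C ⟶ E) (α : (p ≫ w : A ⟶ E) ⟶ v ≫ q) :
    (D.kanR q ≫ D.map w : D.obj B ⟶ D.obj C) ⟶ D.map v ≫ D.kanR p :=
  ⟨Functor.whiskerLeft ((D.kanR q).toFunctor ⋙ (D.map w).toFunctor) (D.adjR p).unit ≫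
    Functor.whiskerLeft (D.kanR q).toFunctor
      (Functor.whiskerRight (eqToHom (D.map_comp p w).symm ≫ D.map₂ α ≫ eqToHom (D.map_comp v q)).toNatTrans
        (D.kanR p).toFunctor) ≫
    Functor.whiskerRight (D.adjR q).counit ((D.map v).toFunctor ⋙ (D.kanR p).toFunctor)⟩

structure Derivator extends DerivatorData where
  der4L : ∀ {J K : Cat.{0, 0}} (u : J ⟶ K) (k : K),
    IsIso (toDerivatorData.bcL
      (show Cat.of (CostructuredArrow u.toFunctor k) ⟶ ecat from (Comma.snd u.toFunctor (Functor.fromPUnit k)).toCatHom)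
      u (Comma.fst u.toFunctor (Functor.fromPUnit k)).toCatHom (ptFun k) ⟨Comma.natTrans u.toFunctor (Functor.fromPUnit k)⟩)
  der4R : ∀ {J K : Cat.{0, 0}} (u : J ⟶ K) (k : K),
    IsIso (toDerivatorData.bcR
      (show Cat.of (StructuredArrow k u.toFunctor) ⟶ ecat from (Comma.fst (Functor.fromPUnit k) u.toFunctor).toCatHom)
      u (Comma.snd (Functor.fromPUnit k) u.toFunctor).toCatHom (ptFun k) ⟨Comma.natTrans (Functor.fromPUnit k) u.toFunctor⟩)

/-- A sieve: a fully faithful functor, injective on objects, such that whenever there is a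
morphism `k ⟶ u(j)` in `K`, the object `k` lies in the image of `u`. -/
def IsSieve {J K : Cat.{0, 0}} (u : J ⟶ K) : Prop :=
  (u.toFunctor : ↥J ⥤ ↥K).Full ∧ (u.toFunctor : ↥J ⥤ ↥K).Faithful ∧ Function.Injective u.toFunctor.obj ∧
    ∀ ⦃k : ↥K⦄ ⦃j : ↥J⦄, (k ⟶ u.toFunctor.obj j) → ∃ j' : ↥J, u.toFunctor.obj j' = k

lemma ptFun_comp {J K : Cat.{0, 0}} (u : J ⟶ K) (j' : ↥J) :
    (ptFun j' ≫ u : ecat ⟶ K) = ptFun (u.toFunctor.obj j') :=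
  Cat.Hom.ext (CategoryTheory.Functor.ext (fun _ => rfl) (by intros; simp [Cat.Hom.comp_toFunctor, Functor.fromPUnit]; exact u.toFunctor.map_id j'))

/-- The canonical comparison `(u(j'))* ∘ u_* ⟹ j'*`, built from the counit of the
adjunction `(u*, u_*)`. -/
def evalKanR (D : Derivator) {J K : Cat.{0, 0}} (u : J ⟶ K) (j' : ↥J) :
    (D.kanR u ≫ D.map (ptFun (u.toFunctor.obj j')) : D.obj J ⟶ D.obj ecat) ⟶ D.map (ptFun j') :=
  ⟨Functor.whiskerLeft (D.kanR u).toFunctor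
    (eqToHom ((congrArg D.map (ptFun_comp u j').symm).trans (D.map_comp _ _))).toNatTrans ≫
  Functor.whiskerRight (D.adjR u).counit (D.map (ptFun j')).toFunctor⟩

end DerTheory

namespace CategoryTheory

open Limits

lemma Cat.Hom.ext_of_isEmpty {A B : Cat} [IsEmpty A] (F G : A ⟶ B) : F = G :=
  Cat.Hom.ext (Functor.ext isEmptyElim fun X => isEmptyElim X)

instance Cat.isIso_toNatTrans {C D : Cat} {F G : C ⟶ D} (η : F ⟶ G) [IsIso η] :
    IsIso η.toNatTrans :=
  inferInstanceAs (IsIso (asIso η).hom.toNatTrans)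

lemma Cat.isIso_of_isIso_toNatTrans {C D : Cat} {F G : C ⟶ D} (η : F ⟶ G)
    [IsIso η.toNatTrans] : IsIso η :=
  (Cat.Hom.isoMk (asIso η.toNatTrans)).isIso_hom

def Limits.IsInitial.fromPUnitAdjunction {C : Type*} [Category C] {c : C} (h : IsInitial c)
    (G : C ⥤ Discrete PUnit.{1}) : Functor.fromPUnit.{0} c ⊣ G :=
  Adjunction.mkOfUnitCounit
    { unit := (Functor.punitExt _ _).hom
      counit := { app Y := h.to Y, naturality _ _ _ := h.hom_ext _ _ }
      left_triangle := by ext; exact h.hom_ext _ _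
      right_triangle := by ext; exact Subsingleton.elim _ _ }

instance Limits.IsInitial.isIso_fromPUnitAdjunction_unit {C : Type*} [Category C] {c : C}
    (h : IsInitial c) (G : C ⥤ Discrete PUnit.{1}) : IsIso (h.fromPUnitAdjunction G).unit :=
  inferInstanceAs (IsIso (Functor.punitExt _ _).hom)

lemma Adjunction.isIso_map_counit_app_of_isIso_unit {C D : Type*} [Category C] [Category D]
    {F : C ⥤ D} {G G' : D ⥤ C} (adj : F ⊣ G) [IsIso adj.unit] (adj' : F ⊣ G') (Z : D) :
    IsIso (G.map (adj'.counit.app Z)) := by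
  have : IsIso (G.map (adj.counit.app Z)) := by
    rw [← IsIso.inv_eq_of_hom_inv_id (adj.right_triangle_components Z)]
    infer_instance
  rw [← adj'.rightAdjointUniq_hom_app_counit adj Z, G.map_comp]
  infer_instance

end CategoryTheory

namespace Bicategory.Opposite

open CategoryTheory.Bicategory

variable {B : Type*} [Bicategory B]

lemma op2_eqToHom {a b : B} {f g : a ⟶ b} (h : f = g) :
    op2 (eqToHom h) = eqToHom (congrArg Quiver.Hom.op h) := by
  subst h; rfl

instance [Strict B] : Strict Bᵒᵖ where
  id_comp f := congrArg Quiver.Hom.op (Strict.comp_id f.unop)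
  comp_id f := congrArg Quiver.Hom.op (Strict.id_comp f.unop)
  assoc f g h := congrArg Quiver.Hom.op (Strict.assoc h.unop g.unop f.unop).symm
  leftUnitor_eqToIso f := by
    ext
    exact (congrArg op2 (congrArg Iso.hom (Strict.rightUnitor_eqToIso f.unop))).trans
      (by simp [op2_eqToHom])
  rightUnitor_eqToIso f := by
    ext
    exact (congrArg op2 (congrArg Iso.hom (Strict.leftUnitor_eqToIso f.unop))).trans
      (by simp [op2_eqToHom])
  associator_eqToIso f g h := by
    ext
    exact (congrArg op2 (congrArg Iso.inv (Strict.associator_eqToIso h.unop g.unop f.unop))).trans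
      (by simp [op2_eqToHom])

def _root_.CategoryTheory.Bicategory.Adjunction.op {a b : B} {f : a ⟶ b} {g : b ⟶ a}
    (adj : f ⊣ g) : g.op ⊣ f.op where
  unit := op2 adj.unit
  counit := op2 adj.counit
  left_triangle := by
    simpa [leftZigzag, rightZigzag, bicategoricalComp] using congrArg op2 adj.right_triangle
  right_triangle := by
    simpa [leftZigzag, rightZigzag, bicategoricalComp] using congrArg op2 adj.left_triangle

end Bicategory.Opposite

namespace DerTheory

open Limits Bicategory Bicategory.Opposite

namespace Prederivator

variable (D : Prederivator.{w, v})

def toStrictPseudofunctor : StrictPseudofunctor Cat.{0, 0}ᵒᵖ Cat.{v, w} :=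
  .mk'' { obj A := D.obj A.unop
          map f := D.map f.unop
          map₂ η := D.map₂ η.unop2
          map₂_id f := D.map₂_id f.unop
          map₂_comp η θ := D.map₂_comp η.unop2 θ.unop2
          map_id A := D.map_id A.unop
          map_comp f g := D.map_comp g.unop f.unop
          map₂_whisker_left f _ _ η := D.map₂_whiskerRight η.unop2 f.unop
          map₂_whisker_right η g := D.map₂_whiskerLeft g.unop η.unop2 }

def mapAdjunction {A B : Cat.{0, 0}} {l : A ⟶ B} {r : B ⟶ A} (adj : l.toFunctor ⊣ r.toFunctor) :
    (D.map r).toFunctor ⊣ (D.map l).toFunctor :=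
  Adjunction.ofCat (D.toStrictPseudofunctor.mapAdjunction adj.toCat.op)

instance isIso_mapAdjunction_unit {A B : Cat.{0, 0}} {l : A ⟶ B} {r : B ⟶ A}
    (adj : l.toFunctor ⊣ r.toFunctor) [IsIso adj.unit] : IsIso (D.mapAdjunction adj).unit := by
  have : IsIso adj.toCat.unit := (Cat.Hom.isoMk (asIso adj.unit)).isIso_hom
  have : IsIso adj.toCat.op.unit := (opFunctor _ _).map_isIso _
  show IsIso (D.toStrictPseudofunctor.mapAdjunction adj.toCat.op).unit.toNatTrans
  rw [StrictPseudofunctor.mapAdjunction_unit]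
  infer_instance

instance isIso_map₂ {A B : Cat.{0, 0}} {f g : A ⟶ B} (η : f ⟶ g) [IsIso η] : IsIso (D.map₂ η) :=
  ⟨D.map₂ (inv η), by simp [← D.map₂_comp, D.map₂_id], by simp [← D.map₂_comp, D.map₂_id]⟩

lemma isIso_map_map₂_app_of_isIso_whiskerLeft {I J K : Cat.{0, 0}} (f : I ⟶ J) {g h : J ⟶ K}
    (α : g ⟶ h) [IsIso (f ◁ α)] (Y : D.obj K) :
    IsIso ((D.map f).toFunctor.map ((D.map₂ α).toNatTrans.app Y)) := by
  have : IsIso (D.map₂ α ▷ D.map f) := by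
    have e : D.map₂ α ▷ D.map f =
        eqToHom (D.map_comp f g).symm ≫ D.map₂ (f ◁ α) ≫ eqToHom (D.map_comp f h) := by
      simp [D.map₂_whiskerLeft]
    rw [e]
    infer_instance
  exact Cat.whiskerRight_app (D.map f) (D.map₂ α) Y ▸ inferInstance

end Prederivator

-- Der1 for the empty family of categories says that `D` of the empty category is trivial.
lemma Semiderivator.isZero_of_isEmpty (D : Semiderivator) {A : Cat.{0, 0}} [IsEmpty A]
    (Y : D.obj A) : IsZero Y := by
  let F : PEmpty.{1} → Cat.{0, 0} := PEmpty.elim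
  let S : Cat.{0, 0} := Cat.of (Σ i, ↥(F i))
  have : IsEmpty S := ⟨fun x => x.1.elim⟩
  let e : D.obj A ≅ D.obj S :=
    { hom := D.map (⟨functorOfIsEmpty S A⟩ : S ⟶ A)
      inv := D.map (⟨functorOfIsEmpty A S⟩ : A ⟶ S)
      hom_inv_id := by
        rw [← D.map_comp, ← D.map_id]; exact congrArg D.map (Cat.Hom.ext_of_isEmpty _ _)
      inv_hom_id := by
        rw [← D.map_comp, ← D.map_id]; exact congrArg D.map (Cat.Hom.ext_of_isEmpty _ _) }
  let Φ := Functor.pi' fun i => (D.map (show F i ⟶ S from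
    (Sigma.incl (C := fun j => ↥(F j)) i).toCatHom)).toFunctor
  have : Φ.IsEquivalence := D.der1 F
  refine IsZero.of_full_of_faithful_of_isZero ((Cat.equivOfIso e).functor ⋙ Φ) Y ?_
  exact ⟨fun _ => ⟨Pi.uniqueOfIsEmpty _⟩, fun _ => ⟨Pi.uniqueOfIsEmpty _⟩⟩

lemma DerivatorData.map_bcR_app_comp_counit (D : DerivatorData) {A B C E : Cat.{0, 0}}
    (p : A ⟶ C) (q : B ⟶ E) (v : A ⟶ B) (w : C ⟶ E) (α : p ≫ w ⟶ v ≫ q) (X : D.obj B) :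
    (D.map p).toFunctor.map ((D.bcR p q v w α).toNatTrans.app X) ≫
        (D.adjR p).counit.app ((D.map v).toFunctor.obj X) =
      (eqToHom (D.map_comp p w).symm ≫ D.map₂ α ≫ eqToHom (D.map_comp v q)).toNatTrans.app
          ((D.kanR q).toFunctor.obj X) ≫ (D.map v).toFunctor.map ((D.adjR q).counit.app X) := by
  rw [← (D.adjR p).homEquiv_counit (g := (D.bcR p q v w α).toNatTrans.app X),
    Equiv.symm_apply_eq, Adjunction.homEquiv_unit]
  simp [DerivatorData.bcR]

lemma DerivatorData.isIso_map_ptFun_map_counit_adjR_of_isInitial (D : DerivatorData)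
    {A : Cat.{0, 0}} {c : A} (h : IsInitial c) (p : A ⟶ ecat) (Z : D.obj A) :
    IsIso ((D.map (ptFun c)).toFunctor.map ((D.adjR p).counit.app Z)) := by
  let adj : (ptFun c).toFunctor ⊣ p.toFunctor := h.fromPUnitAdjunction p.toFunctor
  have : IsIso adj.unit := h.isIso_fromPUnitAdjunction_unit _
  exact (D.mapAdjunction adj).isIso_map_counit_app_of_isIso_unit (D.adjR p) Z

namespace Derivator

variable (D : Derivator) {J K : Cat.{0, 0}} (u : J ⟶ K)

lemma isZero_map_ptFun_kanR_obj_of_isEmpty [HasZeroObject (D.obj ecat)] (k : K)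
    [IsEmpty (StructuredArrow k u.toFunctor)] (X : D.obj J) :
    IsZero ((D.map (ptFun k)).toFunctor.obj ((D.kanR u).toFunctor.obj X)) := by
  let p : Cat.of (StructuredArrow k u.toFunctor) ⟶ ecat :=
    (Comma.fst (Functor.fromPUnit k) u.toFunctor).toCatHom
  let v : Cat.of (StructuredArrow k u.toFunctor) ⟶ J :=
    (Comma.snd (Functor.fromPUnit k) u.toFunctor).toCatHom
  let α : p ≫ ptFun k ⟶ v ≫ u := ⟨Comma.natTrans (Functor.fromPUnit k) u.toFunctor⟩
  have : IsEmpty (Cat.of (StructuredArrow k u.toFunctor)) := ‹_›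
  have hv : IsZero ((D.map v).toFunctor.obj X) := D.isZero_of_isEmpty _
  have := (D.adjR p).rightAdjoint_preservesLimits
  have hp : IsZero ((D.kanR p).toFunctor.obj ((D.map v).toFunctor.obj X)) :=
    (isZero_zero _).of_iso ((hv.isTerminal.isTerminalObj _).uniqueUpToIso
      HasZeroObject.zeroIsTerminal)
  have := D.der4R u k
  exact hp.of_iso (asIso ((D.bcR p u v (ptFun k) α).toNatTrans.app X))

lemma isIso_map_ptFun_map_counit_adjR [u.toFunctor.Full] [u.toFunctor.Faithful] (j : J)
    (X : D.obj J) : IsIso ((D.map (ptFun j)).toFunctor.map ((D.adjR u).counit.app X)) := by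
  let k := u.toFunctor.obj j
  let p : Cat.of (StructuredArrow k u.toFunctor) ⟶ ecat :=
    (Comma.fst (Functor.fromPUnit k) u.toFunctor).toCatHom
  let v : Cat.of (StructuredArrow k u.toFunctor) ⟶ J :=
    (Comma.snd (Functor.fromPUnit k) u.toFunctor).toCatHom
  let α : p ≫ ptFun k ⟶ v ≫ u := ⟨Comma.natTrans (Functor.fromPUnit k) u.toFunctor⟩
  let a : ecat ⟶ Cat.of (StructuredArrow k u.toFunctor) := ptFun (StructuredArrow.mk (𝟙 k))
  have hε := D.isIso_map_ptFun_map_counit_adjR_of_isInitial StructuredArrow.mkIdInitial p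
    ((D.map v).toFunctor.obj X)
  have hβ := D.der4R u k
  have hα : IsIso (a ◁ α) := by
    have (x : ecat) : IsIso ((a ◁ α).toNatTrans.app x) := inferInstanceAs (IsIso (𝟙 k))
    have := NatIso.isIso_of_isIso_app (a ◁ α).toNatTrans
    exact Cat.isIso_of_isIso_toNatTrans _
  have hθ : IsIso ((D.map a).toFunctor.map ((eqToHom (D.map_comp p (ptFun k)).symm ≫ D.map₂ α ≫
      eqToHom (D.map_comp v u)).toNatTrans.app ((D.kanR u).toFunctor.obj X))) := by
    have := D.isIso_map_map₂_app_of_isIso_whiskerLeft a α ((D.kanR u).toFunctor.obj X)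
    simp only [Cat.Hom.toNatTrans_comp, NatTrans.comp_app, Functor.map_comp]
    infer_instance
  have key := congrArg (D.map a).toFunctor.map (D.map_bcR_app_comp_counit p u v (ptFun k) α X)
  rw [Functor.map_comp, Functor.map_comp] at key
  have hj : ptFun j = a ≫ v := Cat.Hom.ext (CategoryTheory.Functor.ext fun _ => rfl)
  rw [hj, D.map_comp]
  exact IsIso.of_isIso_fac_left key.symm

instance isIso_adjR_counit [u.toFunctor.Full] [u.toFunctor.Faithful] :
    IsIso (D.adjR u).counit :=
  have (X : D.obj J) : IsIso ((D.adjR u).counit.app X) :=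
    D.der2 _ fun j => D.isIso_map_ptFun_map_counit_adjR u j X
  NatIso.isIso_of_isIso_app _

lemma isIso_evalKanR [u.toFunctor.Full] [u.toFunctor.Faithful] (j : J) :
    IsIso (evalKanR D u j) := by
  have (X : D.obj J) : IsIso ((evalKanR D u j).toNatTrans.app X) := by
    have := D.isIso_map_ptFun_map_counit_adjR u j X
    dsimp [evalKanR]
    infer_instance
  have := NatIso.isIso_of_isIso_app (evalKanR D u j).toNatTrans
  exact Cat.isIso_of_isIso_toNatTrans _

end Derivator

/-- **Extension by zero along a sieve.**  Let `D` be a pointed derivator and `u : J ⟶ K` a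
sieve.  Then the right Kan extension `u_* : D(J) ⥤ D(K)` is fully faithful; for every
`X ∈ D(J)` and every `k ∈ K` not in the image of `u`, the evaluation `k*(u_* X)` is a zero
object of `D(e)`; and for `k = u(j')` in the image, the canonical map gives
`k*(u_* X) ≅ j'* X`. -/
theorem extension_by_zero (D : Derivator) (hpt : Limits.HasZeroObject ↥(D.obj ecat))
    {J K : Cat.{0, 0}} (u : J ⟶ K) (hu : IsSieve u) :
    (D.kanR u).toFunctor.Full ∧ (D.kanR u).toFunctor.Faithful ∧
      (∀ k : ↥K, (∀ j : ↥J, u.toFunctor.obj j ≠ k) → ∀ X : ↥(D.obj J),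
        Limits.IsZero ((D.map (ptFun k)).toFunctor.obj ((D.kanR u).toFunctor.obj X))) ∧
      (∀ j' : ↥J, IsIso (evalKanR D u j')) := by
  obtain ⟨_, _, -, hsieve⟩ := hu
  have ff := (D.adjR u).fullyFaithfulROfIsIsoCounit
  refine ⟨ff.full, ff.faithful, fun k hk X => ?_, D.isIso_evalKanR u⟩
  have : IsEmpty (StructuredArrow k u.toFunctor) :=
    ⟨fun f => let ⟨j, hj⟩ := hsieve f.hom; hk j hj⟩
  exact D.isZero_map_ptFun_kanR_obj_of_isEmpty u k X

end DerTheory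
end
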